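/- Let S be a semigroup generated by elements of a single J-class J of a stable semigroup. For elements t_1,…,t_r ∈ J, the product t_1t_2⋯t_r belongs to J if and only if each consecutive product t_i t_{i+1} (1 ≤ i ≤ r−1) belongs to J. -/
import Mathlib


/-- Green's quasi-order ≤_R : s ≤_R t iff sS¹ ⊆ tS¹, i.e. s ∈ tS¹. -/
def leR {S : Type*} [Semigroup S] (s t : S) : Prop := s = t ∨ ∃ x, s = t * x

/-- Green's quasi-order ≤_L : s ≤_L t iff S¹s ⊆ S¹t, i.e. s ∈ S¹t. -/
def leL {S : Type*} [Semigroup S] (s t : S) : Prop := s = t ∨ ∃ x, s = x * t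

/-- Green's quasi-order ≤_J : s ≤_J t iff S¹sS¹ ⊆ S¹tS¹, i.e. s ∈ S¹tS¹. -/
def leJ {S : Type*} [Semigroup S] (s t : S) : Prop :=
  s = t ∨ (∃ x, s = x * t) ∨ (∃ y, s = t * y) ∨ ∃ x y, s = x * t * y

/-- Green's equivalence R. -/
def eqR {S : Type*} [Semigroup S] (s t : S) : Prop := leR s t ∧ leR t s

/-- Green's equivalence L. -/
def eqL {S : Type*} [Semigroup S] (s t : S) : Prop := leL s t ∧ leL t s

/-- Green's equivalence J. -/
def eqJ {S : Type*} [Semigroup S] (s t : S) : Prop := leJ s t ∧ leJ t s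

/-- `prodTo t r` is the product `t 0 * t 1 * ⋯ * t r`. -/
def prodTo {S : Type*} [Semigroup S] (t : ℕ → S) : ℕ → S
  | 0 => t 0
  | n + 1 => prodTo t n * t (n + 1)

section Aux
variable {S : Type*} [Semigroup S]

lemma leJ_refl (s : S) : leJ s s := Or.inl rfl

lemma leJ_mul_left' {s t : S} (x : S) (h : leJ s t) : leJ (x * s) t := by
  rcases h with rfl | ⟨x', rfl⟩ | ⟨y', rfl⟩ | ⟨x', y', rfl⟩
  · exact Or.inr (Or.inl ⟨x, rfl⟩)
  · exact Or.inr (Or.inl ⟨x * x', by simp [mul_assoc]⟩)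
  · exact Or.inr (Or.inr (Or.inr ⟨x, y', by simp [mul_assoc]⟩))
  · exact Or.inr (Or.inr (Or.inr ⟨x * x', y', by simp [mul_assoc]⟩))

lemma leJ_mul_right' {s t : S} (y : S) (h : leJ s t) : leJ (s * y) t := by
  rcases h with rfl | ⟨x', rfl⟩ | ⟨y', rfl⟩ | ⟨x', y', rfl⟩
  · exact Or.inr (Or.inr (Or.inl ⟨y, rfl⟩))
  · exact Or.inr (Or.inr (Or.inr ⟨x', y, by simp [mul_assoc]⟩))
  · exact Or.inr (Or.inr (Or.inl ⟨y' * y, by simp [mul_assoc]⟩))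
  · exact Or.inr (Or.inr (Or.inr ⟨x', y' * y, by simp [mul_assoc]⟩))

lemma leJ_trans {s t u : S} (h1 : leJ s t) (h2 : leJ t u) : leJ s u := by
  rcases h1 with rfl | ⟨x, rfl⟩ | ⟨y, rfl⟩ | ⟨x, y, rfl⟩
  · exact h2
  · exact leJ_mul_left' x h2
  · exact leJ_mul_right' y h2
  · exact leJ_mul_right' y (leJ_mul_left' x h2)

lemma eqJ_symm {s t : S} (h : eqJ s t) : eqJ t s := ⟨h.2, h.1⟩

lemma eqJ_trans {s t u : S} (h1 : eqJ s t) (h2 : eqJ t u) : eqJ s u :=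
  ⟨leJ_trans h1.1 h2.1, leJ_trans h2.2 h1.2⟩

lemma leL_leJ {s t : S} (h : leL s t) : leJ s t := by
  rcases h with rfl | ⟨x, rfl⟩
  · exact Or.inl rfl
  · exact Or.inr (Or.inl ⟨x, rfl⟩)

lemma eqL_eqJ {s t : S} (h : eqL s t) : eqJ s t := ⟨leL_leJ h.1, leL_leJ h.2⟩

lemma leL_mul {s t : S} (u : S) (h : leL s t) : leL (s * u) (t * u) := by
  rcases h with rfl | ⟨x, rfl⟩
  · exact Or.inl rfl
  · exact Or.inr ⟨x, by simp [mul_assoc]⟩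

lemma eqL_mul {s t : S} (u : S) (h : eqL s t) : eqL (s * u) (t * u) :=
  ⟨leL_mul u h.1, leL_mul u h.2⟩

lemma prod_leJ (t : ℕ → S) : ∀ r, ∀ i < r, leJ (prodTo t r) (t i * t (i + 1)) := by
  intro r
  induction r with
  | zero => intro i hi; omega
  | succ n ih =>
    intro i hi
    rcases Nat.lt_or_ge i n with h | h
    · exact leJ_mul_right' (t (n + 1)) (ih i h)
    · have hin : i = n := by omega
      subst hin
      clear ih hi
      cases i with
      | zero => exact Or.inl rfl
      | succ m =>
        exact Or.inr (Or.inl ⟨prodTo t m, by simp [prodTo, mul_assoc]⟩)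

end Aux

/-- In a stable semigroup, for elements t_0,…,t_r of a J-class J,
the product t_0⋯t_r lies in J iff every consecutive product t_i t_{i+1}
lies in J. -/
theorem stmt_7 {S : Type*} [Semigroup S]
    (hstabR : ∀ s t : S, leR s t → eqJ s t → eqR s t)
    (hstabL : ∀ s t : S, leL s t → eqJ s t → eqL s t)
    (a : S) (t : ℕ → S) (r : ℕ) (hmem : ∀ i ≤ r, eqJ (t i) a) :
    eqJ (prodTo t r) a ↔ ∀ i < r, eqJ (t i * t (i + 1)) a := by
  constructor
  · intro hJ i hi
    have h1 : leJ (t i * t (i + 1)) a :=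
      leJ_trans (leJ_mul_right' (t (i + 1)) (leJ_refl (t i))) (hmem i (by omega)).1
    have h2 : leJ a (t i * t (i + 1)) := leJ_trans hJ.2 (prod_leJ t r i hi)
    exact ⟨h1, h2⟩
  · intro hcons
    have key : ∀ n ≤ r, eqJ (prodTo t n) a ∧ eqL (prodTo t n) (t n) := by
      intro n
      induction n with
      | zero => intro _; exact ⟨hmem 0 (by omega), ⟨Or.inl rfl, Or.inl rfl⟩⟩
      | succ m ih =>
        intro hmr
        obtain ⟨hJm, hLm⟩ := ih (by omega)
        have hL' : eqL (prodTo t m * t (m + 1)) (t m * t (m + 1)) := eqL_mul _ hLm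
        have hJ' : eqJ (prodTo t (m + 1)) a :=
          eqJ_trans (eqL_eqJ hL') (hcons m (by omega))
        refine ⟨hJ', hstabL _ _ (Or.inr ⟨prodTo t m, rfl⟩) ?_⟩
        exact eqJ_trans hJ' (eqJ_symm (hmem (m + 1) hmr))
    exact (key r le_rfl).1
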